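/- arXiv:1304.4685 — 2 statements merged into one kernel-verified Lean document; each statement's English description precedes it below -/
import Mathlib

section
/- Let θ ∈ (0,1/2), let (x,y,z,λ,γ) ∈ N₂(θ) with duality gap μ, let first- and second-derivative directions be given, and define the quartic q(s) = a₄s⁴ + a₃s³ + a₂s² + a₁s + a₀ with a₀ = −θμ, a₁ = θμ, a₂ = θ·ṗᵀω̇/n, a₃ = ‖ṗ∘ω̈ + ω̇∘p̈ − ((ṗᵀω̈ + ω̇ᵀp̈)/(2n))e‖, a₄ = ‖p̈∘ω̈ − ω̇∘ṗ − ((p̈ᵀω̈ − ω̇ᵀṗ)/(2n))e‖ + θ·ṗᵀω̇/n. Suppose α ∈ [0,π/2] satisfies q(sinα) ≤ 0 and μ(α′) > 0 for every α′ ∈ [0,α]. Then all components of p(α) and ω(α) are positive, ‖p(α)∘ω(α) − μ(α)e‖ ≤ 2θ·μ(α), and in fact pᵢ(α)ωᵢ(α) ≥ (1−2θ)μ(α) > 0 for every i; hence the arc point lies in N₂(2θ). -/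
/-!
With `s = sin α` and `t = 1 - cos α`, the identity `s² = 2t - t²` makes the expansion of the
complementarity products along the arc exact:
`p(α)∘ω(α) = (1 - s) p∘ω + t² (p̈∘ω̈ - ω̇∘ṗ) - s t (ṗ∘ω̈ + ω̇∘p̈)`.
Since `t ≤ s²`, the triangle inequality bounds `‖p(α)∘ω(α) - μ(α)e‖` by
`(1 - s)θμ + s⁴‖…‖ + s³‖…‖`, while positive semidefiniteness of `H` at `s ẋ - t ẍ` bounds
`2θμ(α)` below by `2θ(1 - s)μ - θ(s⁴ + s²)ṗᵀω̇/n`; `q(s) ≤ 0` says precisely that the first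
bound is below the second. The coefficients `a₁, …, a₄` are nonnegative, so `q ∘ sin ≤ 0` on
all of `[0, α]`, and along the whole arc `pᵢωᵢ ≥ (1 - 2θ)μ > 0`: by continuity no component of
`p` or `ω` can change sign.
-/

open scoped BigOperators

noncomputable section

/-- Euclidean dot product of two vectors. -/
def dotp {ι : Type*} [Fintype ι] (u v : ι → ℝ) : ℝ := ∑ i, u i * v i

/-- Euclidean norm of a vector. -/
def enorm {ι : Type*} [Fintype ι] (u : ι → ℝ) : ℝ := Real.sqrt (∑ i, (u i) ^ 2)

/-- Strict feasibility for the box-constrained QP KKT system. -/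
def StrictlyFeasible {n : ℕ} (H : Matrix (Fin n) (Fin n) ℝ)
    (c x y z lam gam : Fin n → ℝ) : Prop :=
  H.mulVec x + c + lam - gam = 0 ∧
  x + y = (fun _ => 1) ∧
  x - z = (fun _ => -1) ∧
  (∀ i, 0 < y i) ∧ (∀ i, 0 < z i) ∧ (∀ i, 0 < lam i) ∧ (∀ i, 0 < gam i)

/-- The central-path neighborhood `N₂(θ)`. -/
def N2 {n : ℕ} (H : Matrix (Fin n) (Fin n) ℝ) (c : Fin n → ℝ) (θ : ℝ)
    (x y z lam gam : Fin n → ℝ) : Prop :=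
  StrictlyFeasible H c x y z lam gam ∧
  _root_.enorm (Sum.elim y z * Sum.elim lam gam
      - fun _ => dotp (Sum.elim y z) (Sum.elim lam gam) / (2 * (n : ℝ)))
    ≤ θ * (dotp (Sum.elim y z) (Sum.elim lam gam) / (2 * (n : ℝ)))

/-- First-derivative direction of the arc at a point `(x,y,z,λ,γ)`. -/
def FirstDir {n : ℕ} (H : Matrix (Fin n) (Fin n) ℝ)
    (y z lam gam xd yd zd ld gd : Fin n → ℝ) : Prop :=
  H.mulVec xd + ld - gd = 0 ∧ yd = -xd ∧ zd = xd ∧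
  lam * yd + y * ld = lam * y ∧ gam * zd + z * gd = gam * z

/-- Second-derivative direction of the arc at a point `(x,y,z,λ,γ)`. -/
def SecondDir {n : ℕ} (H : Matrix (Fin n) (Fin n) ℝ)
    (y z lam gam yd zd ld gd xdd ydd zdd ldd gdd : Fin n → ℝ) : Prop :=
  H.mulVec xdd + ldd - gdd = 0 ∧ ydd = -xdd ∧ zdd = xdd ∧
  lam * ydd + y * ldd = (-2 : ℝ) • (ld * yd) ∧
  gam * zdd + z * gdd = (-2 : ℝ) • (gd * zd)

/-- The ellipse (arc) approximation point: `v(α) = v - v̇·sin α + v̈·(1 - cos α)`. -/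
def arc {n : ℕ} (v vd vdd : Fin n → ℝ) (α : ℝ) : Fin n → ℝ :=
  v - Real.sin α • vd + (1 - Real.cos α) • vdd

/-- Corrector (centering) direction at a point `(x,y,z,λ,γ)` with target `μ`. -/
def CorrDir {n : ℕ} (H : Matrix (Fin n) (Fin n) ℝ)
    (y z lam gam dx dy dz dl dg : Fin n → ℝ) (mu : ℝ) : Prop :=
  H.mulVec dx + dl - dg = 0 ∧ dy = -dx ∧ dz = dx ∧
  lam * dy + y * dl = (fun _ => mu) - lam * y ∧
  gam * dz + z * dg = (fun _ => mu) - gam * z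

open Real Set

section Vectors

variable {ι : Type*} [Fintype ι]

lemma dotp_comm (u v : ι → ℝ) : dotp u v = dotp v u := by
  simp only [dotp, mul_comm]

lemma dotp_eq_sum_mul (u v : ι → ℝ) : dotp u v = ∑ i, (u * v) i := rfl

lemma enorm_eq_norm_toLp (u : ι → ℝ) : _root_.enorm u = ‖WithLp.toLp 2 u‖ := by
  simp [EuclideanSpace.norm_eq, _root_.enorm]

lemma enorm_nonneg (u : ι → ℝ) : 0 ≤ _root_.enorm u :=
  Real.sqrt_nonneg _

lemma abs_apply_le_enorm (u : ι → ℝ) (i : ι) : |u i| ≤ _root_.enorm u := by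
  rw [enorm_eq_norm_toLp]
  exact (PiLp.norm_apply_le (WithLp.toLp 2 u) i).trans_eq' (by simp)

lemma enorm_smul_add_smul_sub_smul_le {a b c : ℝ} (ha : 0 ≤ a) (hb : 0 ≤ b) (hc : 0 ≤ c)
    (u v w : ι → ℝ) :
    _root_.enorm (a • u + b • v - c • w)
      ≤ a * _root_.enorm u + b * _root_.enorm v + c * _root_.enorm w := by
  simp only [enorm_eq_norm_toLp, WithLp.toLp_sub, WithLp.toLp_add, WithLp.toLp_smul]
  calc _ ≤ ‖a • WithLp.toLp 2 u‖ + ‖b • WithLp.toLp 2 v‖ + ‖c • WithLp.toLp 2 w‖ :=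
        (norm_sub_le _ _).trans (by gcongr; exact norm_add_le _ _)
    _ = _ := by simp only [norm_smul, Real.norm_of_nonneg ha, Real.norm_of_nonneg hb,
        Real.norm_of_nonneg hc]

lemma mul_le_apply_of_enorm_sub_const_le {u : ι → ℝ} {m κ : ℝ}
    (h : _root_.enorm (u - fun _ => m) ≤ κ * m) (i : ι) : (1 - κ) * m ≤ u i := by
  have := (abs_le.1 ((abs_apply_le_enorm _ i).trans h)).1
  simp only [Pi.sub_apply] at this
  linarith

def gapMean (n : ℝ) (p w : ι → ℝ) : ℝ := dotp p w / (2 * n)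

def centralDeviation (n : ℝ) (p w : ι → ℝ) : ι → ℝ := p * w - fun _ => gapMean n p w

def stepQuartic (n θ : ℝ) (p w pd wd pdd wdd : ι → ℝ) (s : ℝ) : ℝ :=
  (_root_.enorm (pdd * wdd - wd * pd - fun _ => (dotp pdd wdd - dotp wd pd) / (2 * n))
      + θ * dotp pd wd / n) * s ^ 4
    + _root_.enorm (pd * wdd + wd * pdd - fun _ => (dotp pd wdd + dotp wd pdd) / (2 * n)) * s ^ 3
    + θ * dotp pd wd / n * s ^ 2 + θ * gapMean n p w * s + -θ * gapMean n p w

end Vectors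

lemma pos_of_forall_ne_zero {f : ℝ → ℝ} {α : ℝ} (hf : ContinuousOn f (Icc 0 α)) (hα : 0 ≤ α)
    (h0 : 0 < f 0) (hne : ∀ β ∈ Icc 0 α, f β ≠ 0) : 0 < f α := by
  by_contra! hfα
  obtain ⟨β, hβ, hfβ⟩ := intermediate_value_Icc' hα hf ⟨hfα, h0.le⟩
  exact hne β hβ hfβ

lemma pos_and_pos_of_mul_pos {f g : ℝ → ℝ} {α : ℝ} (hf : Continuous f) (hg : Continuous g)
    (hα : 0 ≤ α) (hf0 : 0 < f 0) (hg0 : 0 < g 0) (hfg : ∀ β ∈ Icc 0 α, 0 < f β * g β) :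
    0 < f α ∧ 0 < g α :=
  ⟨pos_of_forall_ne_zero hf.continuousOn hα hf0 fun β hβ h => by simpa [h] using hfg β hβ,
    pos_of_forall_ne_zero hg.continuousOn hα hg0 fun β hβ h => by simpa [h] using hfg β hβ⟩

lemma one_sub_le_sq_of_sq_add_sq_eq_one {s c : ℝ} (hc : 0 ≤ c) (hsc : s ^ 2 + c ^ 2 = 1) :
    0 ≤ 1 - c ∧ 1 - c ≤ s ^ 2 := by
  constructor <;> nlinarith

section ArcEstimate

variable {ι : Type*} {n θ s c : ℝ} {p w pd wd pdd wdd : ι → ℝ}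

lemma arc_mul_arc (h1 : p * wd + w * pd = p * w) (h2 : p * wdd + w * pdd = (-2 : ℝ) • (wd * pd))
    (hsc : s ^ 2 + c ^ 2 = 1) :
    (p - s • pd + (1 - c) • pdd) * (w - s • wd + (1 - c) • wdd)
      = (1 - s) • (p * w) + (1 - c) ^ 2 • (pdd * wdd - wd * pd)
        - (s * (1 - c)) • (pd * wdd + wd * pdd) := by
  funext i
  have e1 := congrFun h1 i
  have e2 := congrFun h2 i
  simp only [Pi.add_apply, Pi.sub_apply, Pi.mul_apply, Pi.smul_apply, smul_eq_mul] at e1 e2 ⊢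
  linear_combination (-s) * e1 + (1 - c) * e2 + (pd i * wd i) * hsc

variable [Fintype ι]

lemma stepQuartic_monotoneOn (hn : 0 ≤ n) (hθ : 0 ≤ θ) (hμ : 0 ≤ gapMean n p w)
    (hA : 0 ≤ dotp pd wd) : MonotoneOn (stepQuartic n θ p w pd wd pdd wdd) (Ici 0) := by
  intro a (ha : 0 ≤ a) b _ hab
  have := enorm_nonneg (pdd * wdd - wd * pd - fun _ => (dotp pdd wdd - dotp wd pd) / (2 * n))
  have := enorm_nonneg (pd * wdd + wd * pdd - fun _ => (dotp pd wdd + dotp wd pdd) / (2 * n))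
  unfold stepQuartic
  gcongr

lemma gapMean_arc (h1 : p * wd + w * pd = p * w) (h2 : p * wdd + w * pdd = (-2 : ℝ) • (wd * pd))
    (hsc : s ^ 2 + c ^ 2 = 1) :
    gapMean n (p - s • pd + (1 - c) • pdd) (w - s • wd + (1 - c) • wdd)
      = (1 - s) * gapMean n p w + (1 - c) ^ 2 * ((dotp pdd wdd - dotp wd pd) / (2 * n))
        - s * (1 - c) * ((dotp pd wdd + dotp wd pdd) / (2 * n)) := by
  unfold gapMean
  rw [dotp_eq_sum_mul, arc_mul_arc h1 h2 hsc]
  simp only [dotp, Pi.add_apply, Pi.sub_apply, Pi.mul_apply, Pi.smul_apply, smul_eq_mul,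
    Finset.sum_add_distrib, Finset.sum_sub_distrib, ← Finset.mul_sum]
  ring

lemma centralDeviation_arc (h1 : p * wd + w * pd = p * w)
    (h2 : p * wdd + w * pdd = (-2 : ℝ) • (wd * pd)) (hsc : s ^ 2 + c ^ 2 = 1) :
    centralDeviation n (p - s • pd + (1 - c) • pdd) (w - s • wd + (1 - c) • wdd)
      = (1 - s) • centralDeviation n p w
        + (1 - c) ^ 2 • (pdd * wdd - wd * pd - fun _ => (dotp pdd wdd - dotp wd pd) / (2 * n))
        - (s * (1 - c)) •
          (pd * wdd + wd * pdd - fun _ => (dotp pd wdd + dotp wd pdd) / (2 * n)) := by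
  rw [centralDeviation, gapMean_arc h1 h2 hsc, arc_mul_arc h1 h2 hsc, centralDeviation]
  funext i
  simp only [Pi.add_apply, Pi.sub_apply, Pi.mul_apply, Pi.smul_apply, smul_eq_mul]
  ring

lemma gapMean_arc_ge (hn : 0 ≤ n) (hθ : 0 ≤ θ) (h1 : p * wd + w * pd = p * w)
    (h2 : p * wdd + w * pdd = (-2 : ℝ) • (wd * pd))
    (hpsd : ∀ a b : ℝ,
      0 ≤ a ^ 2 * dotp pd wd - a * b * (dotp pd wdd + dotp wd pdd) + b ^ 2 * dotp pdd wdd)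
    (hc : 0 ≤ c) (hsc : s ^ 2 + c ^ 2 = 1) :
    2 * θ * (1 - s) * gapMean n p w - θ * dotp pd wd / n * (s ^ 4 + s ^ 2)
      ≤ 2 * θ * gapMean n (p - s • pd + (1 - c) • pdd) (w - s • wd + (1 - c) • wdd) := by
  obtain ⟨ht0, hts⟩ := one_sub_le_sq_of_sq_add_sq_eq_one hc hsc
  have hA : 0 ≤ dotp pd wd := by simpa using hpsd 1 0
  have ht : (1 - c) ^ 2 ≤ s ^ 4 := by nlinarith
  have hbracket : 0 ≤ (1 - c) ^ 2 * (dotp pdd wdd - dotp pd wd)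
      - s * (1 - c) * (dotp pd wdd + dotp wd pdd) + dotp pd wd * (s ^ 4 + s ^ 2) := by
    nlinarith [hpsd s (1 - c), mul_le_mul_of_nonneg_right ht hA]
  rw [gapMean_arc h1 h2 hsc, dotp_comm wd pd]
  linear_combination mul_nonneg (div_nonneg hθ hn) hbracket

theorem enorm_centralDeviation_arc_le (hn : 0 ≤ n) (hθ : 0 ≤ θ)
    (hprox : _root_.enorm (centralDeviation n p w) ≤ θ * gapMean n p w)
    (h1 : p * wd + w * pd = p * w) (h2 : p * wdd + w * pdd = (-2 : ℝ) • (wd * pd))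
    (hpsd : ∀ a b : ℝ,
      0 ≤ a ^ 2 * dotp pd wd - a * b * (dotp pd wdd + dotp wd pdd) + b ^ 2 * dotp pdd wdd)
    (hs : 0 ≤ s) (hc : 0 ≤ c) (hsc : s ^ 2 + c ^ 2 = 1)
    (hq : stepQuartic n θ p w pd wd pdd wdd s ≤ 0) :
    _root_.enorm (centralDeviation n (p - s • pd + (1 - c) • pdd) (w - s • wd + (1 - c) • wdd))
      ≤ 2 * θ * gapMean n (p - s • pd + (1 - c) • pdd) (w - s • wd + (1 - c) • wdd) := by
  obtain ⟨ht0, hts⟩ := one_sub_le_sq_of_sq_add_sq_eq_one hc hsc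
  have hs1 : 0 ≤ 1 - s := by nlinarith
  set N4 := _root_.enorm (pdd * wdd - wd * pd - fun _ => (dotp pdd wdd - dotp wd pd) / (2 * n))
  set N3 := _root_.enorm (pd * wdd + wd * pdd - fun _ => (dotp pd wdd + dotp wd pdd) / (2 * n))
  have : 0 ≤ N4 := enorm_nonneg _
  have : 0 ≤ N3 := enorm_nonneg _
  calc _ ≤ (1 - s) * _root_.enorm (centralDeviation n p w) + (1 - c) ^ 2 * N4
          + s * (1 - c) * N3 := by
        rw [centralDeviation_arc h1 h2 hsc]
        exact enorm_smul_add_smul_sub_smul_le hs1 (sq_nonneg _) (mul_nonneg hs ht0) _ _ _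
    _ ≤ (1 - s) * (θ * gapMean n p w) + s ^ 4 * N4 + s ^ 3 * N3 := by
        have : (1 - c) ^ 2 ≤ s ^ 4 := by nlinarith
        have : s * (1 - c) ≤ s ^ 3 := by nlinarith
        gcongr
    _ ≤ 2 * θ * (1 - s) * gapMean n p w - θ * dotp pd wd / n * (s ^ 4 + s ^ 2) := by
        unfold stepQuartic at hq
        linarith
    _ ≤ _ := gapMean_arc_ge hn hθ h1 h2 hpsd hc hsc

end ArcEstimate

lemma Matrix.PosSemidef.sq_sub_mul_add_sq_nonneg {m : Type*} [Fintype m]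
    {H : Matrix m m ℝ} (hH : H.PosSemidef) (u v : m → ℝ) (a b : ℝ) :
    0 ≤ a ^ 2 * dotp u (H.mulVec u) - a * b * (dotp u (H.mulVec v) + dotp v (H.mulVec u))
      + b ^ 2 * dotp v (H.mulVec v) := by
  have h := hH.dotProduct_mulVec_nonneg (a • u - b • v)
  simp only [star_trivial, Matrix.mulVec_sub, Matrix.mulVec_smul, sub_dotProduct,
    dotProduct_sub, smul_dotProduct, dotProduct_smul, smul_eq_mul] at h
  simp only [dotp, ← dotProduct.eq_1]
  linear_combination h

section KKT

variable {n : ℕ} {H : Matrix (Fin n) (Fin n) ℝ}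
  {x y z lam gam xd yd zd ld gd xdd ydd zdd ldd gdd : Fin n → ℝ}

lemma sum_elim_arc (y yd ydd z zd zdd : Fin n → ℝ) (α : ℝ) :
    Sum.elim (arc y yd ydd α) (arc z zd zdd α)
      = Sum.elim y z - sin α • Sum.elim yd zd + (1 - cos α) • Sum.elim ydd zdd := by
  funext i
  cases i <;> rfl

lemma arc_zero (v vd vdd : Fin n → ℝ) : arc v vd vdd 0 = v := by
  simp [arc]

lemma continuous_arc_apply (v vd vdd : Fin n → ℝ) (j : Fin n) :
    Continuous fun α => arc v vd vdd α j := by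
  simp only [arc, Pi.add_apply, Pi.sub_apply, Pi.smul_apply, smul_eq_mul]
  fun_prop

lemma dotp_sum_elim_neg (u L G : Fin n → ℝ) :
    dotp (Sum.elim (-u) u) (Sum.elim L G) = dotp u (G - L) := by
  simp only [dotp, Fintype.sum_sum_type, Sum.elim_inl, Sum.elim_inr, Pi.neg_apply,
    Pi.sub_apply, ← Finset.sum_add_distrib]
  exact Finset.sum_congr rfl fun i _ => by ring

lemma FirstDir.complementarity (hfd : FirstDir H y z lam gam xd yd zd ld gd) :
    Sum.elim y z * Sum.elim ld gd + Sum.elim lam gam * Sum.elim yd zd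
      = Sum.elim y z * Sum.elim lam gam := by
  have hy := congrFun hfd.2.2.2.1
  have hz := congrFun hfd.2.2.2.2
  ext (j | j) <;> simp only [Pi.add_apply, Pi.mul_apply, Sum.elim_inl, Sum.elim_inr] at hy hz ⊢
  · linear_combination hy j
  · linear_combination hz j

lemma SecondDir.complementarity
    (hsd : SecondDir H y z lam gam yd zd ld gd xdd ydd zdd ldd gdd) :
    Sum.elim y z * Sum.elim ldd gdd + Sum.elim lam gam * Sum.elim ydd zdd
      = (-2 : ℝ) • (Sum.elim ld gd * Sum.elim yd zd) := by
  have hy := congrFun hsd.2.2.2.1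
  have hz := congrFun hsd.2.2.2.2
  ext (j | j) <;> simp only [Pi.add_apply, Pi.mul_apply, Pi.smul_apply, smul_eq_mul,
    Sum.elim_inl, Sum.elim_inr] at hy hz ⊢
  · linear_combination hy j
  · linear_combination hz j

lemma sq_sub_mul_add_sq_nonneg_of_dirs (hH : H.PosSemidef)
    (hfd : FirstDir H y z lam gam xd yd zd ld gd)
    (hsd : SecondDir H y z lam gam yd zd ld gd xdd ydd zdd ldd gdd) (a b : ℝ) :
    0 ≤ a ^ 2 * dotp (Sum.elim yd zd) (Sum.elim ld gd)
      - a * b * (dotp (Sum.elim yd zd) (Sum.elim ldd gdd)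
        + dotp (Sum.elim ld gd) (Sum.elim ydd zdd))
      + b ^ 2 * dotp (Sum.elim ydd zdd) (Sum.elim ldd gdd) := by
  obtain ⟨h1, rfl, hzd, -, -⟩ := hfd
  obtain ⟨h2, rfl, hzdd, -, -⟩ := hsd
  rw [hzd, hzdd]
  have e1 : gd - ld = H.mulVec xd := by linear_combination -h1
  have e2 : gdd - ldd = H.mulVec xdd := by linear_combination -h2
  rw [dotp_comm (Sum.elim ld gd), dotp_sum_elim_neg, dotp_sum_elim_neg, dotp_sum_elim_neg,
    dotp_sum_elim_neg, e1, e2]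
  exact hH.sq_sub_mul_add_sq_nonneg xd xdd a b

theorem enorm_centralDeviation_arc_le_of_stepQuartic_nonpos (hH : H.PosSemidef) {θ α : ℝ}
    (hθ : 0 < θ)
    (hprox : _root_.enorm (centralDeviation n (Sum.elim y z) (Sum.elim lam gam))
      ≤ θ * gapMean n (Sum.elim y z) (Sum.elim lam gam))
    (hfd : FirstDir H y z lam gam xd yd zd ld gd)
    (hsd : SecondDir H y z lam gam yd zd ld gd xdd ydd zdd ldd gdd) (hα : α ≤ π / 2)
    (hq : stepQuartic n θ (Sum.elim y z) (Sum.elim lam gam) (Sum.elim yd zd) (Sum.elim ld gd)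
      (Sum.elim ydd zdd) (Sum.elim ldd gdd) (sin α) ≤ 0) :
    ∀ β ∈ Icc 0 α,
      _root_.enorm (centralDeviation n (Sum.elim (arc y yd ydd β) (arc z zd zdd β))
          (Sum.elim (arc lam ld ldd β) (arc gam gd gdd β)))
        ≤ 2 * θ * gapMean n (Sum.elim (arc y yd ydd β) (arc z zd zdd β))
          (Sum.elim (arc lam ld ldd β) (arc gam gd gdd β)) := by
  rintro β ⟨hβ0, hβα⟩
  have hpsd := sq_sub_mul_add_sq_nonneg_of_dirs hH hfd hsd
  have hμ : 0 ≤ gapMean n (Sum.elim y z) (Sum.elim lam gam) :=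
    (mul_nonneg_iff_of_pos_left hθ).1 ((enorm_nonneg _).trans hprox)
  have hsin : ∀ γ, 0 ≤ γ → γ ≤ α → 0 ≤ sin γ := fun γ h0 h1 =>
    sin_nonneg_of_nonneg_of_le_pi h0 (by linarith [pi_pos])
  have hqβ := (stepQuartic_monotoneOn (Nat.cast_nonneg n) hθ.le hμ (by simpa using hpsd 1 0)
    (hsin β hβ0 hβα) (hsin α (hβ0.trans hβα) le_rfl)
    (sin_le_sin_of_le_of_le_pi_div_two (by linarith [pi_pos]) hα hβα)).trans hq
  rw [sum_elim_arc y, sum_elim_arc lam]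
  exact enorm_centralDeviation_arc_le (Nat.cast_nonneg n) hθ.le hprox hfd.complementarity
    hsd.complementarity hpsd (hsin β hβ0 hβα) (cos_nonneg_of_mem_Icc ⟨by linarith, by linarith⟩)
    (sin_sq_add_cos_sq β) hqβ

lemma arc_pos_of_mul_pos (hy : ∀ j, 0 < y j) (hz : ∀ j, 0 < z j) (hlam : ∀ j, 0 < lam j)
    (hgam : ∀ j, 0 < gam j) {α : ℝ} (hα : 0 ≤ α)
    (hprod : ∀ β ∈ Icc 0 α, ∀ i, 0 < Sum.elim (arc y yd ydd β) (arc z zd zdd β) i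
      * Sum.elim (arc lam ld ldd β) (arc gam gd gdd β) i) :
    (∀ i, 0 < Sum.elim (arc y yd ydd α) (arc z zd zdd α) i)
      ∧ ∀ i, 0 < Sum.elim (arc lam ld ldd α) (arc gam gd gdd α) i := by
  have key : ∀ i, 0 < Sum.elim (arc y yd ydd α) (arc z zd zdd α) i
      ∧ 0 < Sum.elim (arc lam ld ldd α) (arc gam gd gdd α) i := by
    rintro (j | j)
    · exact pos_and_pos_of_mul_pos (continuous_arc_apply y yd ydd j)
        (continuous_arc_apply lam ld ldd j) hα (by simpa [arc_zero] using hy j)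
        (by simpa [arc_zero] using hlam j) fun β hβ => hprod β hβ (.inl j)
    · exact pos_and_pos_of_mul_pos (continuous_arc_apply z zd zdd j)
        (continuous_arc_apply gam gd gdd j) hα (by simpa [arc_zero] using hz j)
        (by simpa [arc_zero] using hgam j) fun β hβ => hprod β hβ (.inr j)
  exact ⟨fun i => (key i).1, fun i => (key i).2⟩

lemma StrictlyFeasible.arc {c : Fin n → ℝ} (hF : StrictlyFeasible H c x y z lam gam)
    (hfd : FirstDir H y z lam gam xd yd zd ld gd)
    (hsd : SecondDir H y z lam gam yd zd ld gd xdd ydd zdd ldd gdd) {α : ℝ}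
    (hy : ∀ j, 0 < arc y yd ydd α j) (hz : ∀ j, 0 < arc z zd zdd α j)
    (hlam : ∀ j, 0 < arc lam ld ldd α j) (hgam : ∀ j, 0 < arc gam gd gdd α j) :
    StrictlyFeasible H c (arc x xd xdd α) (arc y yd ydd α) (arc z zd zdd α)
      (arc lam ld ldd α) (arc gam gd gdd α) := by
  obtain ⟨e1, e2, e3, -⟩ := hF
  obtain ⟨f1, rfl, rfl, -, -⟩ := hfd
  obtain ⟨s1, rfl, rfl, -, -⟩ := hsd
  refine ⟨?_, ?_, ?_, hy, hz, hlam, hgam⟩ <;>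
    simp only [arc, Matrix.mulVec_add, Matrix.mulVec_sub, Matrix.mulVec_smul]
  · linear_combination (norm := module) e1 - sin α • f1 + (1 - cos α) • s1
  · linear_combination (norm := module) e2
  · linear_combination (norm := module) e3

end KKT

theorem stmt_10_general {n : ℕ} (H : Matrix (Fin n) (Fin n) ℝ) (hH : H.PosDef)
    (c x y z lam gam : Fin n → ℝ)
    (θ : ℝ) (hθ : θ ∈ Set.Ioo (0 : ℝ) (1 / 2))
    (hN : N2 H c θ x y z lam gam)
    (xd yd zd ld gd : Fin n → ℝ)
    (hfd : FirstDir H y z lam gam xd yd zd ld gd)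
    (xdd ydd zdd ldd gdd : Fin n → ℝ)
    (hsd : SecondDir H y z lam gam yd zd ld gd xdd ydd zdd ldd gdd)
    (p w pd wd pdd wdd : Fin n ⊕ Fin n → ℝ)
    (hp : p = Sum.elim y z) (hw : w = Sum.elim lam gam)
    (hpd : pd = Sum.elim yd zd) (hwd : wd = Sum.elim ld gd)
    (hpdd : pdd = Sum.elim ydd zdd) (hwdd : wdd = Sum.elim ldd gdd)
    (μ : ℝ) (hμ : μ = dotp p w / (2 * (n : ℝ)))
    (a0 a1 a2 a3 a4 : ℝ)
    (ha0 : a0 = -θ * μ) (ha1 : a1 = θ * μ)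
    (ha2 : a2 = θ * dotp pd wd / (n : ℝ))
    (ha3 : a3 = _root_.enorm (pd * wdd + wd * pdd
        - fun _ => (dotp pd wdd + dotp wd pdd) / (2 * (n : ℝ))))
    (ha4 : a4 = _root_.enorm (pdd * wdd - wd * pd
        - fun _ => (dotp pdd wdd - dotp wd pd) / (2 * (n : ℝ)))
        + θ * dotp pd wd / (n : ℝ))
    (q : ℝ → ℝ)
    (hq : ∀ s : ℝ, q s = a4 * s ^ 4 + a3 * s ^ 3 + a2 * s ^ 2 + a1 * s + a0)
    (α : ℝ) (hα : α ∈ Set.Icc 0 (Real.pi / 2))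
    (hqα : q (Real.sin α) ≤ 0)
    (hposgap : ∀ α' ∈ Set.Icc (0 : ℝ) α,
      0 < dotp (Sum.elim (arc y yd ydd α') (arc z zd zdd α'))
        (Sum.elim (arc lam ld ldd α') (arc gam gd gdd α')) / (2 * (n : ℝ)))
    (pA wA : Fin n ⊕ Fin n → ℝ)
    (hpA : pA = Sum.elim (arc y yd ydd α) (arc z zd zdd α))
    (hwA : wA = Sum.elim (arc lam ld ldd α) (arc gam gd gdd α))
    (muA : ℝ) (hmuA : muA = dotp pA wA / (2 * (n : ℝ))) :
    (∀ i, 0 < pA i) ∧ (∀ i, 0 < wA i) ∧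
    _root_.enorm (pA * wA - fun _ => muA) ≤ 2 * θ * muA ∧
    (∀ i, (1 - 2 * θ) * muA ≤ pA i * wA i) ∧
    0 < (1 - 2 * θ) * muA ∧
    N2 H c (2 * θ) (arc x xd xdd α) (arc y yd ydd α) (arc z zd zdd α)
      (arc lam ld ldd α) (arc gam gd gdd α) := by
  subst hp hw hpd hwd hpdd hwdd hμ ha0 ha1 ha2 ha3 ha4 hpA hwA hmuA
  obtain ⟨hF, hprox⟩ := hN
  obtain rfl : q = stepQuartic n θ (Sum.elim y z) (Sum.elim lam gam) (Sum.elim yd zd)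
    (Sum.elim ld gd) (Sum.elim ydd zdd) (Sum.elim ldd gdd) := funext hq
  have hbound := enorm_centralDeviation_arc_le_of_stepQuartic_nonpos hH.posSemidef hθ.1 hprox
    hfd hsd hα.2 hqα
  have hlower := fun β hβ => mul_le_apply_of_enorm_sub_const_le (hbound β hβ)
  have hgap : ∀ β ∈ Icc 0 α, 0 < (1 - 2 * θ)
      * gapMean n (Sum.elim (arc y yd ydd β) (arc z zd zdd β))
        (Sum.elim (arc lam ld ldd β) (arc gam gd gdd β)) :=
    fun β hβ => mul_pos (by linarith [hθ.2]) (hposgap β hβ)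
  obtain ⟨hP, hW⟩ := arc_pos_of_mul_pos hF.2.2.2.1 hF.2.2.2.2.1 hF.2.2.2.2.2.1 hF.2.2.2.2.2.2
    hα.1 fun β hβ i => (hgap β hβ).trans_le (hlower β hβ i)
  have hαα : α ∈ Icc 0 α := ⟨hα.1, le_rfl⟩
  exact ⟨hP, hW, hbound α hαα, hlower α hαα, hgap α hαα,
    hF.arc hfd hsd (fun j => hP (.inl j)) (fun j => hP (.inr j)) (fun j => hW (.inl j))
      (fun j => hW (.inr j)), hbound α hαα⟩

/-- if `q(sin α) ≤ 0` and `μ(α') > 0` for all `α' ∈ [0,α]`, then the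
arc point has positive components, satisfies the proximity bound
`‖p(α)∘ω(α) − μ(α)e‖ ≤ 2θμ(α)`, the componentwise bound
`pᵢ(α)ωᵢ(α) ≥ (1−2θ)μ(α) > 0`, and lies in `N₂(2θ)`. -/
theorem stmt_10 {n : ℕ} (hn : 0 < n) (H : Matrix (Fin n) (Fin n) ℝ) (hH : H.PosDef)
    (c x y z lam gam : Fin n → ℝ)
    (θ : ℝ) (hθ : θ ∈ Set.Ioo (0 : ℝ) (1 / 2))
    (hN : N2 H c θ x y z lam gam)
    (xd yd zd ld gd : Fin n → ℝ)
    (hfd : FirstDir H y z lam gam xd yd zd ld gd)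
    (xdd ydd zdd ldd gdd : Fin n → ℝ)
    (hsd : SecondDir H y z lam gam yd zd ld gd xdd ydd zdd ldd gdd)
    (p w pd wd pdd wdd : Fin n ⊕ Fin n → ℝ)
    (hp : p = Sum.elim y z) (hw : w = Sum.elim lam gam)
    (hpd : pd = Sum.elim yd zd) (hwd : wd = Sum.elim ld gd)
    (hpdd : pdd = Sum.elim ydd zdd) (hwdd : wdd = Sum.elim ldd gdd)
    (μ : ℝ) (hμ : μ = dotp p w / (2 * (n : ℝ)))
    (a0 a1 a2 a3 a4 : ℝ)
    (ha0 : a0 = -θ * μ) (ha1 : a1 = θ * μ)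
    (ha2 : a2 = θ * dotp pd wd / (n : ℝ))
    (ha3 : a3 = _root_.enorm (pd * wdd + wd * pdd
        - fun _ => (dotp pd wdd + dotp wd pdd) / (2 * (n : ℝ))))
    (ha4 : a4 = _root_.enorm (pdd * wdd - wd * pd
        - fun _ => (dotp pdd wdd - dotp wd pd) / (2 * (n : ℝ)))
        + θ * dotp pd wd / (n : ℝ))
    (q : ℝ → ℝ)
    (hq : ∀ s : ℝ, q s = a4 * s ^ 4 + a3 * s ^ 3 + a2 * s ^ 2 + a1 * s + a0)
    (α : ℝ) (hα : α ∈ Set.Icc 0 (Real.pi / 2))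
    (hqα : q (Real.sin α) ≤ 0)
    (hposgap : ∀ α' ∈ Set.Icc (0 : ℝ) α,
      0 < dotp (Sum.elim (arc y yd ydd α') (arc z zd zdd α'))
        (Sum.elim (arc lam ld ldd α') (arc gam gd gdd α')) / (2 * (n : ℝ)))
    (pA wA : Fin n ⊕ Fin n → ℝ)
    (hpA : pA = Sum.elim (arc y yd ydd α) (arc z zd zdd α))
    (hwA : wA = Sum.elim (arc lam ld ldd α) (arc gam gd gdd α))
    (muA : ℝ) (hmuA : muA = dotp pA wA / (2 * (n : ℝ))) :
    (∀ i, 0 < pA i) ∧ (∀ i, 0 < wA i) ∧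
    _root_.enorm (pA * wA - fun _ => muA) ≤ 2 * θ * muA ∧
    (∀ i, (1 - 2 * θ) * muA ≤ pA i * wA i) ∧
    0 < (1 - 2 * θ) * muA ∧
    N2 H c (2 * θ) (arc x xd xdd α) (arc y yd ydd α) (arc z zd zdd α)
      (arc lam ld ldd α) (arc gam gd gdd α) :=
  stmt_10_general H hH c x y z lam gam θ hθ hN xd yd zd ld gd hfd xdd ydd zdd ldd gdd hsd p w pd wd
    pdd wdd hp hw hpd hwd hpdd hwdd μ hμ a0 a1 a2 a3 a4 ha0 ha1 ha2 ha3 ha4 q hq α hα hqα hposgap pA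
    wA hpA hwA muA hmuA
end
end

section
/- Let θ ∈ (0,1/2), let (x̄,ȳ,z̄,λ̄,γ̄) be a strictly feasible point lying in N₂(2θ) with gap μ̄, and let (Δx,Δy,Δz,Δλ,Δγ) be a corrector direction at this point, with Δp=(Δy,Δz), Δω=(Δλ,Δγ). Then 0 ≤ ΔpᵀΔω/(2n) ≤ (θ²(1+2θ)/(n(1−2θ)²))·μ̄. -/
open scoped BigOperators

noncomputable section

/-! Put `s = p ∘ ω`. The corrector equations read `ω_i Δp_i + p_i Δω_i = μ̄ - s_i`, and
`ΔpᵀΔω = ΔxᵀHΔx ≥ 0` because `Δy = -Δx`, `Δz = Δx` and `Δγ - Δλ = HΔx`. For the upper bound,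
`4 s_i Δp_i Δω_i ≤ (ω_i Δp_i + p_i Δω_i)² = (μ̄ - s_i)²`, while membership in `N₂(2θ)` gives
`s_i ≥ (1 - 2θ) μ̄` and `‖s - μ̄e‖² ≤ 4θ²μ̄²`. Summing, `(1 - 2θ) ΔpᵀΔω ≤ θ²μ̄`, which is
stronger than the claimed bound. -/

theorem dotp_sumElim {α β : Type*} [Fintype α] [Fintype β] (u v : α → ℝ) (u' v' : β → ℝ) :
    dotp (Sum.elim u u') (Sum.elim v v') = dotp u v + dotp u' v' :=
  Fintype.sum_sum_type _

theorem dotp_pos {ι : Type*} [Fintype ι] [Nonempty ι] {u v : ι → ℝ}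
    (hu : ∀ i, 0 < u i) (hv : ∀ i, 0 < v i) : 0 < dotp u v :=
  Finset.sum_pos (fun i _ => mul_pos (hu i) (hv i)) Finset.univ_nonempty

theorem sum_sq_le_of_enorm_le {ι : Type*} [Fintype ι] {u : ι → ℝ} {r : ℝ}
    (h : _root_.enorm u ≤ r) : ∑ i, u i ^ 2 ≤ r ^ 2 :=
  (Real.sqrt_le_iff.mp h).2

theorem sq_le_of_enorm_le {ι : Type*} [Fintype ι] {u : ι → ℝ} {r : ℝ}
    (h : _root_.enorm u ≤ r) (i : ι) : u i ^ 2 ≤ r ^ 2 :=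
  (Finset.single_le_sum (fun j _ => sq_nonneg (u j)) (Finset.mem_univ i)).trans
    (sum_sq_le_of_enorm_le h)

-- `(w a + p b)² - 4 (p w)(a b) = (w a - p b)²`; the bound `c ≤ p w` matters only when `a b ≥ 0`.
theorem four_mul_mul_le_sq_of_le_mul {p w a b c : ℝ} (hc : 0 ≤ c) (hcpw : c ≤ p * w) :
    4 * c * (a * b) ≤ (w * a + p * b) ^ 2 := by
  rcases le_total 0 (a * b) with hab | hab
  · nlinarith [sq_nonneg (w * a - p * b)]
  · nlinarith [sq_nonneg (w * a + p * b)]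

theorem four_mul_dotp_le_of_enorm_le {ι : Type*} [Fintype ι] {p w a b : ι → ℝ} {μ δ : ℝ}
    (hμ : 0 ≤ μ) (hδ : δ ≤ 1) (hnorm : _root_.enorm (p * w - fun _ => μ) ≤ δ * μ)
    (heq : ∀ i, w i * a i + p i * b i = μ - p i * w i) :
    4 * ((1 - δ) * μ) * dotp a b ≤ (δ * μ) ^ 2 := by
  have hδμ : 0 ≤ δ * μ := (Real.sqrt_nonneg _).trans hnorm
  have hlow : ∀ i, (1 - δ) * μ ≤ p i * w i := fun i => by
    have := sq_le_of_enorm_le hnorm i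
    simp only [Pi.sub_apply, Pi.mul_apply] at this
    nlinarith [abs_le_of_sq_le_sq' this hδμ]
  calc 4 * ((1 - δ) * μ) * dotp a b
      = ∑ i, 4 * ((1 - δ) * μ) * (a i * b i) := Finset.mul_sum _ _ _
    _ ≤ ∑ i, (w i * a i + p i * b i) ^ 2 := Finset.sum_le_sum fun i _ =>
        four_mul_mul_le_sq_of_le_mul (mul_nonneg (by linarith) hμ) (hlow i)
    _ = ∑ i, (p * w - fun _ => μ : ι → ℝ) i ^ 2 :=
        Finset.sum_congr rfl fun i _ => by simp only [heq, Pi.sub_apply, Pi.mul_apply]; ring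
    _ ≤ (δ * μ) ^ 2 := sum_sq_le_of_enorm_le hnorm

namespace CorrDir

variable {n : ℕ} {H : Matrix (Fin n) (Fin n) ℝ} {y z lam gam dx dy dz dl dg : Fin n → ℝ}
  {mu : ℝ}

theorem dotp_eq_dotProduct_mulVec (h : CorrDir H y z lam gam dx dy dz dl dg mu) :
    dotp (Sum.elim dy dz) (Sum.elim dl dg) = dx ⬝ᵥ H.mulVec dx := by
  obtain ⟨hH, hy, hz, -, -⟩ := h
  have hdual : H.mulVec dx = dg - dl := by rw [← sub_eq_zero, ← hH]; abel
  rw [hy, hz, dotp_sumElim, hdual, dotProduct_sub]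
  simp only [dotp, dotProduct, Pi.neg_apply, neg_mul, Finset.sum_neg_distrib]
  ring

theorem complementarity (h : CorrDir H y z lam gam dx dy dz dl dg mu) (i : Fin n ⊕ Fin n) :
    Sum.elim lam gam i * Sum.elim dy dz i + Sum.elim y z i * Sum.elim dl dg i
      = mu - Sum.elim y z i * Sum.elim lam gam i := by
  obtain ⟨-, -, -, hy, hz⟩ := h
  rcases i with i | i
  · simpa [mul_comm (y i)] using congrFun hy i
  · simpa [mul_comm (z i)] using congrFun hz i

end CorrDir

theorem div_le_of_four_mul_le {n θ μ D : ℝ} (hn : 0 < n) (hθ : θ ∈ Set.Ioo (0 : ℝ) (1 / 2))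
    (hμ : 0 < μ) (hD : 4 * ((1 - 2 * θ) * μ) * D ≤ (2 * θ * μ) ^ 2) :
    D / (2 * n) ≤ (θ ^ 2 * (1 + 2 * θ) / (n * (1 - 2 * θ) ^ 2)) * μ := by
  obtain ⟨hθ0, hθ1⟩ := hθ
  have hκ : 0 < 1 - 2 * θ := by linarith
  have hD' : (1 - 2 * θ) * D ≤ θ ^ 2 * μ :=
    le_of_mul_le_mul_left (by nlinarith) (by positivity : 0 < 4 * μ)
  rw [div_le_iff₀ (by positivity), div_mul_eq_mul_div, mul_comm, ← mul_div_assoc,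
    le_div_iff₀ (by positivity)]
  calc D * (n * (1 - 2 * θ) ^ 2) = n * (1 - 2 * θ) * ((1 - 2 * θ) * D) := by ring
    _ ≤ n * (1 - 2 * θ) * (θ ^ 2 * μ) := by gcongr
    _ ≤ 2 * n * (θ ^ 2 * (1 + 2 * θ) * μ) := by
      have : 0 ≤ n * θ ^ 2 * μ := by positivity
      nlinarith

/-- `0 ≤ ΔpᵀΔω/(2n) ≤ (θ²(1+2θ)/(n(1−2θ)²))·μ̄`. -/
theorem stmt_14 {n : ℕ} (hn : 0 < n) (H : Matrix (Fin n) (Fin n) ℝ) (hH : H.PosDef)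
    (c : Fin n → ℝ)
    (θ : ℝ) (hθ : θ ∈ Set.Ioo (0 : ℝ) (1 / 2))
    (xb yb zb lb gb : Fin n → ℝ)
    (mub : ℝ)
    (hmub : mub = dotp (Sum.elim yb zb) (Sum.elim lb gb) / (2 * (n : ℝ)))
    (hN : N2 H c (2 * θ) xb yb zb lb gb)
    (dx dy dz dl dg : Fin n → ℝ)
    (hcd : CorrDir H yb zb lb gb dx dy dz dl dg mub)
    (dp dw : Fin n ⊕ Fin n → ℝ)
    (hdp : dp = Sum.elim dy dz) (hdw : dw = Sum.elim dl dg) :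
    0 ≤ dotp dp dw / (2 * (n : ℝ)) ∧
    dotp dp dw / (2 * (n : ℝ))
      ≤ (θ ^ 2 * (1 + 2 * θ) / ((n : ℝ) * (1 - 2 * θ) ^ 2)) * mub := by
  obtain ⟨⟨-, -, -, hy, hz, hl, hg⟩, hnorm⟩ := hN
  rw [← hmub] at hnorm
  subst hdp hdw
  have hnR : (0 : ℝ) < n := Nat.cast_pos.mpr hn
  have := Fin.pos_iff_nonempty.mp hn
  have hmub_pos : 0 < mub := hmub ▸ div_pos
    (dotp_pos (fun i => Sum.rec hy hz i) (fun i => Sum.rec hl hg i)) (by positivity)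
  refine ⟨div_nonneg ?_ (by positivity), div_le_of_four_mul_le hnR hθ hmub_pos ?_⟩
  · rw [hcd.dotp_eq_dotProduct_mulVec]
    exact hH.posSemidef.dotProduct_mulVec_nonneg dx
  · exact four_mul_dotp_le_of_enorm_le hmub_pos.le (by linarith [hθ.2]) hnorm
      hcd.complementarity

end
end
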